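/- Fix ε > 0, m ≥ 0. For all (x,t) ∈ εℤ² with t > ε: √(1+m²ε²)·a(x, t+ε, m, ε) + √(1+m²ε²)·a(x, t−ε, m, ε) − a(x+ε, t, m, ε) − a(x−ε, t, m, ε) = 0. -/
import Mathlib


open scoped BigOperators

noncomputable section

/-- Endpoint `x`-coordinate of a checker path of `n` steps encoded by step directions:
`true` = step `(1,1)`, `false` = step `(-1,1)`. -/
def endpt {n : ℕ} (d : Fin n → Bool) : ℤ :=
  ∑ i, (if d i then (1 : ℤ) else -1)

/-- The number of turns of a checker path encoded by step directions. -/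
def turns {n : ℕ} (d : Fin n → Bool) : ℕ :=
  ((Finset.range n).filter fun i =>
    ∃ h : i + 1 < n, d ⟨i, Nat.lt_of_succ_lt h⟩ ≠ d ⟨i + 1, h⟩).card

/-- Checker paths from `(0,0)` to `(x,n)` with the first step to `(1,1)`,
encoded by their step directions. -/
def pathsTo (x : ℤ) (n : ℕ) : Finset (Fin n → Bool) :=
  Finset.univ.filter fun d => (∃ h : 0 < n, d ⟨0, h⟩ = true) ∧ endpt d = x

/-- Feynman checkers with mass `m` and lattice step `ε`: the value `a(εx, εt, m, ε)`,
where `x t : ℤ` are the coordinates in units of `ε`. -/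
def am (x t : ℤ) (m ε : ℝ) : ℂ :=
  (1 + m ^ 2 * ε ^ 2 : ℂ) ^ ((1 - (t : ℂ)) / 2) * Complex.I *
    ∑ d ∈ pathsTo x t.toNat, (-Complex.I * (m * ε)) ^ turns d

/-- The basic model: `a(x,t)`. -/
def a (x t : ℤ) : ℂ :=
  (2 : ℂ) ^ ((1 - (t : ℂ)) / 2) * Complex.I *
    ∑ d ∈ pathsTo x t.toNat, (-Complex.I) ^ turns d

lemma snoc_mk {n : ℕ} (d : Fin (n+1) → Bool) (b : Bool) (i : ℕ) (h : i < n+1) (h2 : i < n+2) :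
    (Fin.snoc d b : Fin (n+2) → Bool) ⟨i, h2⟩ = d ⟨i, h⟩ := by
  have : (⟨i, h2⟩ : Fin (n+2)) = Fin.castSucc ⟨i, h⟩ := rfl
  rw [this, Fin.snoc_castSucc]

lemma snoc_top {n : ℕ} (d : Fin (n+1) → Bool) (b : Bool) (h2 : n+1 < n+2) :
    (Fin.snoc d b : Fin (n+2) → Bool) ⟨n+1, h2⟩ = b := by
  have : (⟨n+1, h2⟩ : Fin (n+2)) = Fin.last (n+1) := rfl
  rw [this, Fin.snoc_last]

lemma turns_eq_sum {n : ℕ} (d : Fin n → Bool) :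
    turns d = ∑ i ∈ Finset.range n,
      if ∃ h : i + 1 < n, d ⟨i, Nat.lt_of_succ_lt h⟩ ≠ d ⟨i + 1, h⟩ then 1 else 0 := by
  rw [turns, Finset.card_filter]

lemma turns_snoc {n : ℕ} (d : Fin (n+1) → Bool) (b : Bool) :
    turns (Fin.snoc d b) = turns d + (if d (Fin.last n) = b then 0 else 1) := by
  set d' : Fin (n+2) → Bool := Fin.snoc d b with hd'
  rw [show turns (Fin.snoc d b : Fin (n+2) → Bool) = turns d' from rfl]
  rw [turns_eq_sum, turns_eq_sum, Finset.sum_range_succ, Finset.sum_range_succ,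
    Finset.sum_range_succ (n := n)]
  have h1 : (if ∃ h : n+1+1 < n+2, d' ⟨n+1, Nat.lt_of_succ_lt h⟩ ≠ d' ⟨n+1+1, h⟩ then (1:ℕ) else 0) = 0 := by
    simp only [ite_eq_right_iff]
    rintro ⟨h, -⟩; omega
  have h2 : (if ∃ h : n+1 < n+1, d ⟨n, Nat.lt_of_succ_lt h⟩ ≠ d ⟨n+1, h⟩ then (1:ℕ) else 0) = 0 := by
    simp only [ite_eq_right_iff]
    rintro ⟨h, -⟩; omega
  rw [h1, h2]
  have h3 : (if ∃ h : n+1 < n+2, d' ⟨n, Nat.lt_of_succ_lt h⟩ ≠ d' ⟨n+1, h⟩ then (1:ℕ) else 0)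
      = (if d (Fin.last n) = b then 0 else 1) := by
    have e1 : d' ⟨n, by omega⟩ = d ⟨n, by omega⟩ := snoc_mk d b n (by omega) (by omega)
    have e2 : d' ⟨n+1, by omega⟩ = b := snoc_top d b (by omega)
    by_cases hc : d (Fin.last n) = b
    · rw [if_pos hc, if_neg]
      rintro ⟨h, hne⟩
      exact hne (by rw [e1, e2]; exact hc)
    · rw [if_neg hc, if_pos ⟨by omega, by rw [e1, e2]; exact hc⟩]
  rw [h3]
  have h4 : ∀ i ∈ Finset.range n,
      (if ∃ h : i+1 < n+2, d' ⟨i, Nat.lt_of_succ_lt h⟩ ≠ d' ⟨i+1, h⟩ then (1:ℕ) else 0)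
      = (if ∃ h : i+1 < n+1, d ⟨i, Nat.lt_of_succ_lt h⟩ ≠ d ⟨i+1, h⟩ then 1 else 0) := by
    intro i hi
    rw [Finset.mem_range] at hi
    have e1 : d' ⟨i, by omega⟩ = d ⟨i, by omega⟩ := snoc_mk d b i (by omega) (by omega)
    have e2 : d' ⟨i+1, by omega⟩ = d ⟨i+1, by omega⟩ := snoc_mk d b (i+1) (by omega) (by omega)
    congr 1
    apply propext
    constructor
    · rintro ⟨h, hne⟩
      exact ⟨by omega, by rwa [e1, e2] at hne⟩
    · rintro ⟨h, hne⟩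
      exact ⟨by omega, by rwa [e1, e2]⟩
  rw [Finset.sum_congr rfl h4]
  ring

lemma endpt_snoc {n : ℕ} (d : Fin n → Bool) (b : Bool) :
    endpt (Fin.snoc d b) = endpt d + (if b then 1 else -1) := by
  unfold endpt
  rw [Fin.sum_univ_castSucc]
  simp

lemma sum_last_eq (z : ℂ) (x : ℤ) (n : ℕ) (b : Bool) :
    ∑ d ∈ (pathsTo x (n+2)).filter (fun d => d (Fin.last (n+1)) = b), z ^ turns d
      = ∑ d ∈ pathsTo (x - (if b then 1 else -1)) (n+1),
          z ^ turns d * (if d (Fin.last n) = b then 1 else z) := by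
  refine Finset.sum_nbij' (fun d => Fin.init d) (fun d => Fin.snoc d b) ?_ ?_ ?_ ?_ ?_
  · intro d hd
    rw [Finset.mem_filter] at hd
    obtain ⟨hd, hlast⟩ := hd
    rw [pathsTo, Finset.mem_filter] at hd ⊢
    obtain ⟨-, ⟨h0, hfirst⟩, hend⟩ := hd
    refine ⟨Finset.mem_univ _, ⟨⟨by omega, ?_⟩, ?_⟩⟩
    · show d (Fin.castSucc ⟨0, by omega⟩) = true
      exact hfirst
    · show endpt (Fin.init d) = x - (if b = true then 1 else -1)
      have h5 := endpt_snoc (Fin.init d) (d (Fin.last (n+1)))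
      rw [Fin.snoc_init_self, hlast, hend] at h5
      omega
  · intro d hd
    rw [pathsTo, Finset.mem_filter] at hd
    obtain ⟨-, ⟨h0, hfirst⟩, hend⟩ := hd
    rw [Finset.mem_filter, pathsTo, Finset.mem_filter]
    refine ⟨⟨Finset.mem_univ _, ⟨⟨by omega, ?_⟩, ?_⟩⟩, Fin.snoc_last _ _⟩
    · show (Fin.snoc d b : Fin (n+2) → Bool) ⟨0, by omega⟩ = true
      rw [snoc_mk d b 0 (by omega) (by omega)]
      exact hfirst
    · show endpt (Fin.snoc d b : Fin (n+2) → Bool) = x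
      rw [endpt_snoc, hend]; ring
  · intro d hd
    rw [Finset.mem_filter] at hd
    show (Fin.snoc (Fin.init d) b : Fin (n+2) → Bool) = d
    rw [← hd.2]
    exact Fin.snoc_init_self d
  · intro d _
    show Fin.init (Fin.snoc d b : Fin (n+2) → Bool) = d
    simp
  · intro d hd
    rw [Finset.mem_filter] at hd
    have : turns d = turns (Fin.snoc (Fin.init d) b : Fin (n+2) → Bool) := by
      conv_lhs => rw [← Fin.snoc_init_self d, hd.2]
    rw [this, turns_snoc, pow_add]
    congr 1
    by_cases hc : Fin.init d (Fin.last n) = b <;> simp [hc]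

def pS (z : ℂ) (x : ℤ) (n : ℕ) : ℂ := ∑ d ∈ pathsTo x n, z ^ turns d
def pA (z : ℂ) (x : ℤ) (n : ℕ) : ℂ :=
  ∑ d ∈ (pathsTo x (n+1)).filter (fun d => d (Fin.last n) = true), z ^ turns d
def pB (z : ℂ) (x : ℤ) (n : ℕ) : ℂ :=
  ∑ d ∈ (pathsTo x (n+1)).filter (fun d => d (Fin.last n) = false), z ^ turns d

lemma filter_not_eq (s : Finset (Fin (n+1) → Bool)) (b : Bool) :
    s.filter (fun d => ¬ d (Fin.last n) = b) = s.filter (fun d => d (Fin.last n) = !b) := by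
  apply Finset.filter_congr
  intro d _
  cases b <;> cases hb : d (Fin.last n) <;> simp [hb]

lemma pS_split (z : ℂ) (x : ℤ) (n : ℕ) : pS z x (n+1) = pA z x n + pB z x n := by
  rw [pS, pA, pB, ← Finset.sum_filter_add_sum_filter_not (pathsTo x (n+1))
    (fun d => d (Fin.last n) = true), filter_not_eq]
  simp

lemma rhs_split (z : ℂ) (x : ℤ) (n : ℕ) (b : Bool) :
    ∑ d ∈ pathsTo x (n+1), z ^ turns d * (if d (Fin.last n) = b then 1 else z)
      = (if b then pA z x n + z * pB z x n else z * pA z x n + pB z x n) := by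
  rw [← Finset.sum_filter_add_sum_filter_not (pathsTo x (n+1)) (fun d => d (Fin.last n) = b)]
  have h1 : ∑ d ∈ (pathsTo x (n+1)).filter (fun d => d (Fin.last n) = b),
      z ^ turns d * (if d (Fin.last n) = b then 1 else z)
      = ∑ d ∈ (pathsTo x (n+1)).filter (fun d => d (Fin.last n) = b), z ^ turns d := by
    apply Finset.sum_congr rfl
    intro d hd
    rw [Finset.mem_filter] at hd
    rw [if_pos hd.2, mul_one]
  have h2 : ∑ d ∈ (pathsTo x (n+1)).filter (fun d => ¬ d (Fin.last n) = b),
      z ^ turns d * (if d (Fin.last n) = b then 1 else z)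
      = z * ∑ d ∈ (pathsTo x (n+1)).filter (fun d => d (Fin.last n) = !b), z ^ turns d := by
    rw [filter_not_eq, Finset.mul_sum]
    apply Finset.sum_congr rfl
    intro d hd
    rw [Finset.mem_filter] at hd
    rw [if_neg (by rw [hd.2]; cases b <;> simp), mul_comm]
  rw [h1, h2]
  cases b
  · rw [if_neg (by simp)]
    show _ = z * pA z x n + pB z x n
    rw [pA, pB]
    ring_nf
    rfl
  · rw [if_pos rfl]
    show _ = pA z x n + z * pB z x n
    rw [pA, pB]
    ring_nf
    rfl

lemma pA_rec (z : ℂ) (x : ℤ) (n : ℕ) :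
    pA z x (n+1) = pA z (x-1) n + z * pB z (x-1) n := by
  have h := sum_last_eq z x n true
  rw [if_pos rfl] at h
  rw [pA, h, rhs_split, if_pos rfl]

lemma pB_rec (z : ℂ) (x : ℤ) (n : ℕ) :
    pB z x (n+1) = z * pA z (x+1) n + pB z (x+1) n := by
  have h := sum_last_eq z x n false
  rw [if_neg (by simp), show x - (-1) = x + 1 by ring] at h
  rw [pB, h, rhs_split, if_neg (by simp)]

lemma key (z : ℂ) (x : ℤ) (n : ℕ) :
    pS z x (n+3) + (1 - z^2) * pS z x (n+1)
      = pS z (x+1) (n+2) + pS z (x-1) (n+2) := by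
  have e1 : pS z x (n+3) = pA z x (n+2) + pB z x (n+2) := pS_split z x (n+2)
  have e2 : pS z (x+1) (n+2) = pA z (x+1) (n+1) + pB z (x+1) (n+1) := pS_split z (x+1) (n+1)
  have e3 : pS z (x-1) (n+2) = pA z (x-1) (n+1) + pB z (x-1) (n+1) := pS_split z (x-1) (n+1)
  have e4 : pS z x (n+1) = pA z x n + pB z x n := pS_split z x n
  have r1 : pA z x (n+2) = pA z (x-1) (n+1) + z * pB z (x-1) (n+1) := pA_rec z x (n+1)
  have r2 : pB z x (n+2) = z * pA z (x+1) (n+1) + pB z (x+1) (n+1) := pB_rec z x (n+1)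
  have r3 : pA z (x+1) (n+1) = pA z x n + z * pB z x n := by
    have h := pA_rec z (x+1) n; rwa [show x+1-1 = x by ring] at h
  have r4 : pB z (x-1) (n+1) = z * pA z x n + pB z x n := by
    have h := pB_rec z (x-1) n; rwa [show x-1+1 = x by ring] at h
  rw [e1, e2, e3, e4, r1, r2, r3, r4]
  ring

/-- Klein–Gordon equation for Feynman checkers with mass m and lattice step ε. -/
theorem klein_gordon_mass (m ε : ℝ) (hε : 0 < ε) (hm : 0 ≤ m) (x t : ℤ) (ht : 1 < t) :
    (Real.sqrt (1 + m ^ 2 * ε ^ 2) : ℂ) * am x (t + 1) m ε +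
    (Real.sqrt (1 + m ^ 2 * ε ^ 2) : ℂ) * am x (t - 1) m ε -
    am (x + 1) t m ε - am (x - 1) t m ε = 0 := by
  obtain ⟨k, rfl⟩ : ∃ k : ℕ, t = (k : ℤ) + 2 := ⟨(t - 2).toNat, by omega⟩
  set z : ℂ := -Complex.I * ((m : ℂ) * (ε : ℂ)) with hzdef
  set c : ℂ := 1 + (m : ℂ) ^ 2 * (ε : ℂ) ^ 2 with hcdef
  have hr : (0:ℝ) < 1 + m ^ 2 * ε ^ 2 := by positivity
  have hcr : ((1 + m ^ 2 * ε ^ 2 : ℝ) : ℂ) = c := by rw [hcdef]; push_cast; ring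
  have hc0 : c ≠ 0 := by
    rw [← hcr]
    exact_mod_cast ne_of_gt hr
  have hsq : (Real.sqrt (1 + m ^ 2 * ε ^ 2) : ℂ) = c ^ (1/2 : ℂ) := by
    rw [Real.sqrt_eq_rpow, Complex.ofReal_cpow hr.le, hcr]
    norm_num
  have hz : (1:ℂ) - z ^ 2 = c := by
    rw [hzdef, hcdef]
    have h := Complex.I_sq
    linear_combination (-(m:ℂ)^2 * (ε:ℂ)^2) * h
  set e₀ : ℂ := (1 - ((((k:ℤ) + 2 : ℤ)) : ℂ)) / 2 with he₀
  have hN1 : ((k:ℤ) + 2 + 1).toNat = k + 3 := by omega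
  have hN2 : ((k:ℤ) + 2 - 1).toNat = k + 1 := by omega
  have hN3 : ((k:ℤ) + 2).toNat = k + 2 := by omega
  have hE1 : (Real.sqrt (1 + m ^ 2 * ε ^ 2) : ℂ) * am x ((k:ℤ) + 2 + 1) m ε
      = c ^ e₀ * Complex.I * pS z x (k + 3) := by
    rw [am, hN1, hsq]
    have h : c ^ (1/2 : ℂ) * c ^ ((1 - ((((k:ℤ) + 2 + 1 : ℤ)) : ℂ)) / 2) = c ^ e₀ := by
      rw [he₀, ← Complex.cpow_add _ _ hc0]
      congr 1
      push_cast
      ring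
    rw [pS]
    linear_combination (Complex.I * ∑ d ∈ pathsTo x (k + 3), z ^ turns d) * h
  have hE2 : (Real.sqrt (1 + m ^ 2 * ε ^ 2) : ℂ) * am x ((k:ℤ) + 2 - 1) m ε
      = c * (c ^ e₀ * Complex.I * pS z x (k + 1)) := by
    rw [am, hN2, hsq]
    have h : c ^ (1/2 : ℂ) * c ^ ((1 - ((((k:ℤ) + 2 - 1 : ℤ)) : ℂ)) / 2) = c * c ^ e₀ := by
      have he : (1/2 : ℂ) + (1 - ((((k:ℤ) + 2 - 1 : ℤ)) : ℂ)) / 2 = 1 + e₀ := by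
        rw [he₀]; push_cast; ring
      rw [← Complex.cpow_add _ _ hc0, he, Complex.cpow_add _ _ hc0, Complex.cpow_one]
    rw [pS]
    linear_combination (Complex.I * ∑ d ∈ pathsTo x (k + 1), z ^ turns d) * h
  have hE3 : am (x + 1) ((k:ℤ) + 2) m ε = c ^ e₀ * Complex.I * pS z (x + 1) (k + 2) := by
    rw [am, hN3, pS]
  have hE4 : am (x - 1) ((k:ℤ) + 2) m ε = c ^ e₀ * Complex.I * pS z (x - 1) (k + 2) := by
    rw [am, hN3, pS]
  rw [hE1, hE2, hE3, hE4]
  have hkey := key z x k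
  linear_combination (c ^ e₀ * Complex.I) * hkey - (c ^ e₀ * Complex.I * pS z x (k + 1)) * hz
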